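/- Let g : S_k → ℝ satisfy g(a) + g(b) ≥ 2 g(0) for all distinct nonzero a, b ∈ S_k (i.e., g is a k-submodular function of one variable), and let γ ∈ S_k be a minimizer of g. Set μ := 2(g(0) − g(γ)) and σ_α := g(α) − 2 g(0) + g(γ) for α ∈ {1,…,k}. Then μ ≥ 0; σ_α ≥ 0 for every α ∈ {1,…,k} with α ≠ γ; if μ > 0 then γ ≠ 0; and for every x ∈ S_k one has g(x) = g(γ) + μ·d(γ, x) + Σ_{α ∈ {1,…,k}, α ≠ γ} σ_α·[x = α], where [x = α] equals 1 if x = α and 0 otherwise. -/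
import Mathlib


/-- The Potts-type distance `d` on `S_k`: `d(a,b) = 1` if `a, b` are distinct
nonzero, `0` if `a = b`, and `1/2` otherwise. -/
noncomputable def dPotts {k : ℕ} (a b : Fin (k + 1)) : ℝ :=
  if a = b then 0 else if a ≠ 0 ∧ b ≠ 0 then 1 else 1 / 2

/-- Decomposition of a one-variable `k`-submodular function `g` with minimizer
`γ`: the coefficients `μ` and `σ_α` are nonnegative, `μ > 0` forces `γ ≠ 0`, and
`g(x) = g(γ) + μ·d(γ,x) + Σ_{α ≠ 0, α ≠ γ} σ_α·[x = α]`. -/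
theorem potts_decomposition (k : ℕ) (hk : 0 < k) (g : Fin (k + 1) → ℝ)
    (hsub : ∀ a b : Fin (k + 1), a ≠ 0 → b ≠ 0 → a ≠ b → 2 * g 0 ≤ g a + g b)
    (γ : Fin (k + 1)) (hγ : ∀ x, g γ ≤ g x) :
    0 ≤ 2 * (g 0 - g γ) ∧
    (∀ α : Fin (k + 1), α ≠ 0 → α ≠ γ → 0 ≤ g α - 2 * g 0 + g γ) ∧
    (0 < 2 * (g 0 - g γ) → γ ≠ 0) ∧
    (∀ x : Fin (k + 1),
      g x = g γ + 2 * (g 0 - g γ) * dPotts γ x +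
        ∑ α ∈ Finset.univ.filter (fun α : Fin (k + 1) => α ≠ 0 ∧ α ≠ γ),
          (g α - 2 * g 0 + g γ) * (if x = α then 1 else 0)) := by
  have h0 := hγ 0
  refine ⟨by linarith, ?_, ?_, ?_⟩
  · intro α hα hαγ
    by_cases hγ0 : γ = 0
    · subst hγ0; have := hγ α; linarith
    · have := hsub α γ hα hγ0 hαγ; linarith
  · intro hμ hc; subst hc; linarith
  · intro x
    have hsum :
        (∑ α ∈ Finset.univ.filter (fun α : Fin (k + 1) => α ≠ 0 ∧ α ≠ γ),
          (g α - 2 * g 0 + g γ) * (if x = α then 1 else 0)) =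
        if x ≠ 0 ∧ x ≠ γ then g x - 2 * g 0 + g γ else 0 := by
      simp only [mul_ite, mul_one, mul_zero, Finset.sum_ite_eq, Finset.mem_filter,
        Finset.mem_univ, true_and]
    rw [hsum]
    unfold dPotts
    by_cases hxγ : x = γ
    · subst hxγ; simp
    · rw [if_neg (Ne.symm hxγ)]
      by_cases hγ0 : γ = 0
      · subst hγ0
        have hx0 : x ≠ 0 := hxγ
        rw [if_neg (by simp), if_pos ⟨hx0, hxγ⟩]; ring
      · by_cases hx0 : x = 0
        · subst hx0
          rw [if_neg (by simp), if_neg (by simp)]; ring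
        · rw [if_pos ⟨hγ0, hx0⟩, if_pos ⟨hx0, hxγ⟩]; ring
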